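/- arXiv:1007.4823 — 2 statements merged into one kernel-verified Lean document; each statement's English description precedes it below -/
import Mathlib

section
/- Let Γ be a discrete subgroup of SL(2,ℝ), let λ ∈ ℤ and m, δ ≥ 0, and let F(z,X) = Σ_{r=0}^m f_r(z) X^r ∈ QP^m_{λ+2m+2δ}(Γ). Define φ_i = (m−i)! · f_{m−i} for 0 ≤ i ≤ m. Then for each k ∈ {0,1,…,m}, all z ∈ ℍ and all γ ∈ Γ, one has (φ_k |_{2k+2δ+λ} γ)(z) = Σ_{r=0}^k (1/r!) 𝔎(γ,z)^r φ_{k−r}(z). -/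
/-! Inverting the substitution `X ↦ 𝔍²(X − 𝔎)` in the transformation law `F ‖_ξ γ = F` shows that
`𝔍^(−ξ) 𝔍^(2n) f_n(γz)` is the `n`-th Taylor coefficient of `F(z, ·)` at `𝔎`, namely
`∑_r C(n+r, n) 𝔎^r f_(n+r)(z)`. For `n = m − k` the power of `𝔍` is `−(2k + 2δ + λ)`, and
`n! C(n+r, n) = (n+r)!/r!`. -/

noncomputable section

open Complex Polynomial

/-- The upper half plane `ℍ`, as a subset of `ℂ`. -/
def UHP : Set ℂ := {z : ℂ | 0 < z.im}

/-- `SL(2, ℝ)`. -/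
abbrev SL2R := Matrix.SpecialLinearGroup (Fin 2) ℝ

/-- `GL⁺(2, ℝ)`, the group of real 2×2 matrices of positive determinant. -/
abbrev GL2P := Matrix.GLPos (Fin 2) ℝ

/-- Topology on `SL(2,ℝ)` induced from the space of matrices (used to speak of
discrete subgroups of `SL(2,ℝ)`). -/
instance : TopologicalSpace SL2R :=
  TopologicalSpace.induced (fun g : SL2R => (g : Matrix (Fin 2) (Fin 2) ℝ)) inferInstance

/-- A function belongs to `𝓕` if it is holomorphic on the upper half plane. -/
def Hol (f : ℂ → ℂ) : Prop := DifferentiableOn ℂ f UHP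

/-- `𝔍(γ, z) = cz + d` for `γ ∈ SL(2, ℝ)`. -/
def jJ (γ : SL2R) (z : ℂ) : ℂ := (γ 1 0 : ℝ) * z + (γ 1 1 : ℝ)

/-- `𝔎(γ, z) = c/(cz + d)` for `γ ∈ SL(2, ℝ)`. -/
def kK (γ : SL2R) (z : ℂ) : ℂ := (γ 1 0 : ℝ) / jJ γ z

/-- `γ z = (az+b)/(cz+d)` for `γ ∈ SL(2, ℝ)`. -/
def mact (γ : SL2R) (z : ℂ) : ℂ := ((γ 0 0 : ℝ) * z + (γ 0 1 : ℝ)) / jJ γ z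

/-- The underlying real matrix of an element of `GL⁺(2, ℝ)`. -/
def gmat (α : GL2P) : Matrix (Fin 2) (Fin 2) ℝ :=
  ((α : Matrix.GeneralLinearGroup (Fin 2) ℝ) : Matrix (Fin 2) (Fin 2) ℝ)

/-- The determinant of an element of `GL⁺(2, ℝ)`. -/
def gdet (α : GL2P) : ℝ := (gmat α).det

/-- `𝔍(α, z) = cz + d` for `α ∈ GL⁺(2, ℝ)`. -/
def gJ (α : GL2P) (z : ℂ) : ℂ := (gmat α 1 0 : ℝ) * z + (gmat α 1 1 : ℝ)

/-- `𝔎(α, z) = c/(cz + d)` for `α ∈ GL⁺(2, ℝ)`. -/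
def gK (α : GL2P) (z : ℂ) : ℂ := (gmat α 1 0 : ℝ) / gJ α z

/-- `α z = (az+b)/(cz+d)` for `α ∈ GL⁺(2, ℝ)`. -/
def gact (α : GL2P) (z : ℂ) : ℂ := ((gmat α 0 0 : ℝ) * z + (gmat α 0 1 : ℝ)) / gJ α z

/-- `(det α)^(μ/2)` for `α ∈ GL⁺(2, ℝ)` and `μ ∈ ℤ`. -/
def detpow (α : GL2P) (μ : ℤ) : ℂ := ((gdet α ^ ((μ : ℝ) / 2) : ℝ) : ℂ)

/-- The weight-`ξ` action `F ∥_ξ γ` of `SL(2,ℝ)` on polynomials over `𝓕`: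
`(F ∥_ξ γ)(z, X) = 𝔍(γ,z)^(-ξ) F(γz, 𝔍(γ,z)^2 (X - 𝔎(γ,z)))`. -/
def polyAct (ξ : ℤ) (F : ℂ → Polynomial ℂ) (γ : SL2R) : ℂ → Polynomial ℂ := fun z =>
  Polynomial.C (jJ γ z ^ (-ξ)) *
    (F (mact γ z)).comp (Polynomial.C (jJ γ z ^ 2) * (Polynomial.X - Polynomial.C (kK γ z)))

/-- The weight-`ξ` action `F ∥_ξ α` of `GL⁺(2,ℝ)` on polynomials over `𝓕`:
`(F ∥_ξ α)(z, X) = (det α)^(ξ/2) 𝔍(α,z)^(-ξ) F(αz, (det α)⁻¹ 𝔍(α,z)^2 (X - 𝔎(α,z)))`. -/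
def polyActG (ξ : ℤ) (F : ℂ → Polynomial ℂ) (α : GL2P) : ℂ → Polynomial ℂ := fun z =>
  Polynomial.C (detpow α ξ * gJ α z ^ (-ξ)) *
    (F (gact α z)).comp
      (Polynomial.C ((gdet α : ℂ)⁻¹ * gJ α z ^ 2) * (Polynomial.X - Polynomial.C (gK α z)))

/-- The weight-`l` action `Φ |^J_l γ` of `SL(2,ℝ)` on formal power series over `𝓕`:
`(Φ |^J_l γ)(z, X) = 𝔍(γ,z)^(-l) e^(-𝔎(γ,z) X) Φ(γz, 𝔍(γ,z)^(-2) X)`. -/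
def psAct (l : ℤ) (Φ : ℂ → PowerSeries ℂ) (γ : SL2R) : ℂ → PowerSeries ℂ := fun z =>
  PowerSeries.C (jJ γ z ^ (-l)) *
    (PowerSeries.mk fun n => (-(kK γ z)) ^ n / (n.factorial : ℂ)) *
    PowerSeries.rescale (jJ γ z ^ (-2 : ℤ)) (Φ (mact γ z))

/-- The weight-`l` action `Φ |^J_l α` of `GL⁺(2,ℝ)` on formal power series over `𝓕`:
`(Φ |^J_l α)(z, X) = (det α)^(l/2) 𝔍(α,z)^(-l) e^(-𝔎(α,z) X) Φ(αz, (det α) 𝔍(α,z)^(-2) X)`. -/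
def psActG (l : ℤ) (Φ : ℂ → PowerSeries ℂ) (α : GL2P) : ℂ → PowerSeries ℂ := fun z =>
  PowerSeries.C (detpow α l * gJ α z ^ (-l)) *
    (PowerSeries.mk fun n => (-(gK α z)) ^ n / (n.factorial : ℂ)) *
    PowerSeries.rescale ((gdet α : ℂ) * gJ α z ^ (-2 : ℤ)) (Φ (gact α z))

/-- The map `Π^δ_m`: for `Φ(z,X) = Σ_k φ_k(z) X^(k+δ)`,
`(Π^δ_m Φ)(z, X) = Σ_{r=0}^m (1/r!) φ_(m-r)(z) X^r`. -/
def PiDM (δ m : ℕ) (Φ : ℂ → PowerSeries ℂ) : ℂ → Polynomial ℂ := fun z =>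
  ∑ r ∈ Finset.range (m + 1),
    Polynomial.C ((PowerSeries.coeff (m - r + δ) (Φ z)) / (r.factorial : ℂ)) *
      Polynomial.X ^ r

/-- Membership in `𝓕_m[X]`: degree at most `m` and holomorphic coefficients. -/
def InFmX (m : ℕ) (F : ℂ → Polynomial ℂ) : Prop :=
  (∀ z : ℂ, (F z).degree ≤ (m : WithBot ℕ)) ∧ ∀ r : ℕ, Hol fun z => (F z).coeff r

/-- Membership in `𝓕[[X]]_δ = X^δ 𝓕[[X]]` with holomorphic coefficients. -/
def InFXd (δ : ℕ) (Φ : ℂ → PowerSeries ℂ) : Prop :=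
  (∀ z : ℂ, ∀ k < δ, PowerSeries.coeff k (Φ z) = 0) ∧
    ∀ k : ℕ, Hol fun z => PowerSeries.coeff k (Φ z)

/-- `QP^m_ξ(Γ)`: quasimodular polynomials of weight `ξ` and degree at most `m` for `Γ`. -/
def IsQP (Γ : Subgroup SL2R) (ξ : ℤ) (m : ℕ) (F : ℂ → Polynomial ℂ) : Prop :=
  InFmX m F ∧ ∀ γ ∈ Γ, ∀ z ∈ UHP, polyAct ξ F γ z = F z

/-- `J_l(Γ)_δ`: Jacobi-like forms of weight `l` for `Γ` lying in `𝓕[[X]]_δ`. -/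
def IsJF (Γ : Subgroup SL2R) (l : ℤ) (δ : ℕ) (Φ : ℂ → PowerSeries ℂ) : Prop :=
  InFXd δ Φ ∧ ∀ γ ∈ Γ, ∀ z ∈ UHP, psAct l Φ γ z = Φ z

/-- `M_μ(Γ)`: modular forms of weight `μ` for `Γ` (cusp conditions suppressed). -/
def IsModular (Γ : Subgroup SL2R) (μ : ℤ) (f : ℂ → ℂ) : Prop :=
  Hol f ∧ ∀ γ ∈ Γ, ∀ z ∈ UHP, jJ γ z ^ (-μ) * f (mact γ z) = f z

/-- `QM^m_ξ(Γ)`: quasimodular forms of weight `ξ` and depth at most `m` for `Γ`. -/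
def IsQM (Γ : Subgroup SL2R) (ξ : ℤ) (m : ℕ) (f : ℂ → ℂ) : Prop :=
  Hol f ∧ ∃ g : ℕ → ℂ → ℂ, (∀ r, Hol (g r)) ∧
    ∀ γ ∈ Γ, ∀ z ∈ UHP,
      jJ γ z ^ (-ξ) * f (mact γ z) = ∑ r ∈ Finset.range (m + 1), g r z * kK γ z ^ r

/-- The factorial `t!` of an integer `t` (equal to `(t.toNat)!`; intended for `t ≥ 0`). -/
def zfact (t : ℤ) : ℂ := (t.toNat.factorial : ℂ)

open scoped Nat

namespace Polynomial

variable {R : Type*} [CommRing R]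

theorem taylor_comp_C_mul_X_sub_C (p : R[X]) (u v : R) :
    taylor v (p.comp (C u * (X - C v))) = p.comp (C u * X) := by
  rw [taylor_apply, comp_assoc]
  congr 1
  simp

theorem mul_pow_mul_coeff_eq_taylor_coeff_of_C_mul_comp_eq {p q : R[X]} {a u v : R}
    (h : C a * p.comp (C u * (X - C v)) = q) (n : ℕ) :
    a * u ^ n * p.coeff n = (taylor v q).coeff n := by
  rw [← h, taylor_mul, taylor_C, taylor_comp_C_mul_X_sub_C, coeff_C_mul, comp_C_mul_X_coeff]
  ring

theorem factorial_mul_taylor_coeff {K : Type*} [Field K] [CharZero K] (p : K[X]) (v : K)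
    {n N : ℕ} (hp : p.natDegree ≤ n + N) :
    (n ! : K) * (taylor v p).coeff n =
      ∑ r ∈ Finset.range (N + 1), 1 / (r ! : K) * v ^ r * ((n + r)! * p.coeff (n + r)) := by
  have hdeg : (hasseDeriv n p).natDegree < N + 1 :=
    (natDegree_hasseDeriv_le p n).trans_lt (by omega)
  rw [taylor_coeff, eval_eq_sum_range' hdeg, Finset.mul_sum]
  refine Finset.sum_congr rfl fun r _ => ?_
  have hchoose : ((n + r).choose n : K) * r ! * n ! = (n + r)! := by
    rw [add_comm n r]; exact_mod_cast Nat.add_choose_mul_factorial_mul_factorial r n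
  have hr : (r ! : K) ≠ 0 := Nat.cast_ne_zero.mpr r.factorial_ne_zero
  rw [hasseDeriv_coeff, add_comm r n]
  field_simp
  linear_combination v ^ r * p.coeff (n + r) * hchoose

end Polynomial

theorem SL2R.det_eq_one (γ : SL2R) : (γ 0 0 : ℝ) * γ 1 1 - γ 0 1 * γ 1 0 = 1 := by
  have := γ.det_coe
  rwa [Matrix.det_fin_two] at this

theorem jJ_ne_zero (γ : SL2R) {z : ℂ} (hz : z ∈ UHP) : jJ γ z ≠ 0 := by
  intro h
  have him := congrArg Complex.im h
  have hre := congrArg Complex.re h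
  simp only [jJ, add_im, mul_im, ofReal_re, ofReal_im, zero_mul, add_zero, zero_im,
    mul_eq_zero, add_re, mul_re, sub_zero, zero_re] at him hre
  have hc : γ 1 0 = 0 := him.resolve_right (ne_of_gt hz)
  have := SL2R.det_eq_one γ
  simp_all

theorem stmt7_general (Γ : Subgroup SL2R) (l : ℤ) (m δ : ℕ)
    (F : ℂ → Polynomial ℂ) (hF : IsQP Γ (l + 2 * (m : ℤ) + 2 * (δ : ℤ)) m F) :
    ∀ k ≤ m, ∀ γ ∈ Γ, ∀ z ∈ UHP,
      jJ γ z ^ (-(2 * (k : ℤ) + 2 * (δ : ℤ) + l)) *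
          (((m - k).factorial : ℂ) * (F (mact γ z)).coeff (m - k)) =
        ∑ r ∈ Finset.range (k + 1),
          (1 / (r.factorial : ℂ)) * kK γ z ^ r *
            (((m - (k - r)).factorial : ℂ) * (F z).coeff (m - (k - r))) := by
  intro k hk γ hγ z hz
  have hJ := jJ_ne_zero γ hz
  have hweight : jJ γ z ^ (-(2 * (k : ℤ) + 2 * (δ : ℤ) + l)) =
      jJ γ z ^ (-(l + 2 * (m : ℤ) + 2 * (δ : ℤ))) * (jJ γ z ^ 2) ^ (m - k) := by
    rw [← zpow_natCast, ← zpow_natCast, ← zpow_mul, ← zpow_add₀ hJ]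
    congr 1
    push_cast [Nat.cast_sub hk]
    ring
  have htaylor := mul_pow_mul_coeff_eq_taylor_coeff_of_C_mul_comp_eq (hF.2 γ hγ z hz) (m - k)
  have hdeg : (F z).natDegree ≤ m - k + k :=
    (natDegree_le_iff_degree_le.mpr (hF.1.1 z)).trans (by omega)
  calc _ = ((m - k)! : ℂ) * (taylor (kK γ z) (F z)).coeff (m - k) := by
        rw [hweight, ← htaylor]; ring
    _ = _ := factorial_mul_taylor_coeff _ _ hdeg
    _ = _ := Finset.sum_congr rfl fun r hr => by
        rw [show m - (k - r) = m - k + r by rw [Finset.mem_range] at hr; omega]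

theorem stmt7 (Γ : Subgroup SL2R) (hΓ : DiscreteTopology Γ) (l : ℤ) (m δ : ℕ)
    (F : ℂ → Polynomial ℂ) (hF : IsQP Γ (l + 2 * (m : ℤ) + 2 * (δ : ℤ)) m F) :
    ∀ k ≤ m, ∀ γ ∈ Γ, ∀ z ∈ UHP,
      jJ γ z ^ (-(2 * (k : ℤ) + 2 * (δ : ℤ) + l)) *
          (((m - k).factorial : ℂ) * (F (mact γ z)).coeff (m - k)) =
        ∑ r ∈ Finset.range (k + 1),
          (1 / (r.factorial : ℂ)) * kK γ z ^ r *
            (((m - (k - r)).factorial : ℂ) * (F z).coeff (m - (k - r))) :=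
  stmt7_general Γ l m δ F hF
end
end

section
/- Let λ ∈ ℤ and m, δ ≥ 0. For every formal power series Φ(z,X) ∈ 𝓕[[X]]_δ and every α ∈ GL⁺(2,ℝ), one has Π^δ_m(Φ |^J_λ α) = (Π^δ_m Φ) ‖_{λ+2m+2δ} α. Consequently, if Γ is a discrete subgroup of SL(2,ℝ) and ΓαΓ = Γα_1 ⊔ … ⊔ Γα_s is a disjoint right-coset decomposition, then Π^δ_m(Σ_{i=1}^s Φ |^J_λ α_i) = Σ_{i=1}^s (Π^δ_m Φ) ‖_{λ+2m+2δ} α_i, i.e. Π^δ_m intertwines the Hecke operators T^J_λ(α) on Jacobi-like forms and T^P_{λ+2m+2δ}(α) on quasimodular polynomials. -/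
/-!
`Π^δ_m Φ` is the coefficient of `Y^(m+δ)` in `Φ(Y) e^(XY)`, since the coefficients of `Φ` below
`δ` vanish. In this form, multiplying `Φ` by `e^(cY)` becomes the substitution `X ↦ X + c`
(because `e^(cY) e^(XY) = e^((X+c)Y)`), and the rescaling `Y ↦ uY` becomes `X ↦ u⁻¹X` together
with the factor `u^(m+δ)`. Up to a scalar factor, `|^J_λ α` is made of exactly these two
operations, with `c = -𝔎(α,z)` and `u = det α · 𝔍(α,z)^(-2)`, and the factor `u^(m+δ)` raises the
weight from `λ` to `λ + 2m + 2δ`. The statement about Hecke operators follows because `Π^δ_m` is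
additive.
-/

noncomputable section

open Complex Polynomial

theorem PowerSeries.X_pow_dvd_rescale {R : Type*} [CommSemiring R] {δ : ℕ} {f : PowerSeries R}
    (hf : PowerSeries.X ^ δ ∣ f) (u : R) : PowerSeries.X ^ δ ∣ PowerSeries.rescale u f := by
  rw [PowerSeries.X_pow_dvd_iff] at hf ⊢
  intro k hk
  rw [PowerSeries.coeff_rescale, hf k hk, mul_zero]

section CoeffMulExp

open PowerSeries (coeff rescale exp map)

variable {R : Type*} [CommRing R] [Algebra ℚ R]

/-- The coefficient of `Y ^ n` in `f(Y) e^(XY)`, a polynomial in `X`. -/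
def coeffMulExp (n : ℕ) (f : PowerSeries R) : R[X] :=
  coeff n (map C f * rescale X (exp R[X]))

theorem coeffMulExp_comp (n : ℕ) (f : PowerSeries R) (p : R[X]) :
    (coeffMulExp n f).comp p = coeff n (map C f * rescale p (exp R[X])) := by
  have hC : (compRingHom p).comp C = C := RingHom.ext fun a => C_comp
  have hf : map (compRingHom p) (map C f) = map C f := by
    rw [← RingHom.comp_apply, ← PowerSeries.map_comp, hC]
  rw [coeffMulExp, ← coe_compRingHom_apply, ← PowerSeries.coeff_map, RingHom.map_mul, hf,
    ← PowerSeries.rescale_map, PowerSeries.map_exp, coe_compRingHom_apply, X_comp]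

theorem coeffMulExp_C_mul (n : ℕ) (a : R) (f : PowerSeries R) :
    coeffMulExp n (PowerSeries.C a * f) = C a * coeffMulExp n f := by
  rw [coeffMulExp, coeffMulExp, RingHom.map_mul, PowerSeries.map_C, mul_assoc,
    PowerSeries.coeff_C_mul]

theorem coeffMulExp_rescale_exp_mul (n : ℕ) (c : R) (f : PowerSeries R) :
    coeffMulExp n (rescale c (exp R) * f) = (coeffMulExp n f).comp (X + C c) := by
  rw [coeffMulExp_comp, ← PowerSeries.exp_mul_exp_eq_exp_add, coeffMulExp, RingHom.map_mul,
    ← PowerSeries.rescale_map, PowerSeries.map_exp]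
  ring_nf

theorem coeffMulExp_rescale {K : Type*} [Field K] [CharZero K] (n : ℕ) {u : K} (hu : u ≠ 0)
    (f : PowerSeries K) :
    coeffMulExp n (rescale u f) = C (u ^ n) * (coeffMulExp n f).comp (C u⁻¹ * X) := by
  have hX : (X : K[X]) = C u⁻¹ * X * C u := by
    rw [mul_comm, ← mul_assoc, ← C_mul, mul_inv_cancel₀ hu, C_1, one_mul]
  rw [coeffMulExp_comp, coeffMulExp, ← PowerSeries.rescale_map, hX, ← PowerSeries.rescale_rescale,
    ← map_mul, PowerSeries.coeff_rescale, ← C_pow, ← hX]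

end CoeffMulExp

open PowerSeries (coeff rescale exp map) in
theorem PiDM_apply_eq_coeffMulExp (m : ℕ) {δ : ℕ} {Φ : ℂ → PowerSeries ℂ} {z : ℂ}
    (hΦz : PowerSeries.X ^ δ ∣ Φ z) : PiDM δ m Φ z = coeffMulExp (m + δ) (Φ z) := by
  rw [PowerSeries.X_pow_dvd_iff] at hΦz
  rw [coeffMulExp, PowerSeries.coeff_mul, ← Finset.Nat.sum_antidiagonal_swap]
  simp only [Prod.fst_swap, Prod.snd_swap]
  rw [Finset.Nat.sum_antidiagonal_eq_sum_range_succ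
    (fun r k => coeff k (map C (Φ z)) * coeff r (rescale X (exp ℂ[X])))]
  have hsub : Finset.range (m + 1) ⊆ Finset.range (m + δ).succ :=
    Finset.range_subset_range.2 (by omega)
  rw [← Finset.sum_subset hsub]
  · refine Finset.sum_congr rfl fun r hr => ?_
    rw [Finset.mem_range] at hr
    simp only [show m + δ - r = m - r + δ by omega, PowerSeries.coeff_map,
      PowerSeries.coeff_rescale, PowerSeries.coeff_exp, one_mul,
      Polynomial.algebraMap_apply, map_inv₀, map_natCast, div_eq_mul_inv, C_mul]
    ring
  · intro r hr hr'
    rw [Finset.mem_range] at hr hr'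
    rw [PowerSeries.coeff_map, hΦz _ (by omega), C_0, zero_mul]

theorem gdet_pos (α : GL2P) : 0 < gdet α := by
  simpa [gdet, gmat, Matrix.GeneralLinearGroup.val_det_apply] using (Matrix.mem_glpos _).1 α.prop

theorem gJ_ne_zero (α : GL2P) {z : ℂ} (hz : z ∈ UHP) : gJ α z ≠ 0 := by
  have hcd : ![gmat α 1 0, gmat α 1 1] ≠ 0 := by
    intro h
    have h0 : gmat α 1 0 = 0 := congr_fun h 0
    have h1 : gmat α 1 1 = 0 := congr_fun h 1
    have := gdet_pos α
    simp [gdet, Matrix.det_fin_two, h0, h1] at this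
  simpa [gJ] using UpperHalfPlane.linear_ne_zero (cd := ![gmat α 1 0, gmat α 1 1]) ⟨z, hz⟩ hcd

theorem detpow_add_two_mul (α : GL2P) (l : ℤ) (n : ℕ) :
    detpow α (l + 2 * n) = detpow α l * (gdet α : ℂ) ^ n := by
  rw [detpow, detpow]
  push_cast
  rw [show ((l : ℝ) + 2 * n) / 2 = (l : ℝ) / 2 + n by ring, Real.rpow_add (gdet_pos α),
    Real.rpow_natCast]
  push_cast
  ring

theorem detpow_mul_gJ_zpow_add_two_mul (α : GL2P) {z : ℂ} (hz : z ∈ UHP) (l : ℤ) (n : ℕ) :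
    detpow α (l + 2 * n) * gJ α z ^ (-(l + 2 * n)) =
      detpow α l * gJ α z ^ (-l) * ((gdet α : ℂ) * gJ α z ^ (-2 : ℤ)) ^ n := by
  rw [detpow_add_two_mul, show -(l + 2 * (n : ℤ)) = -l + (-2) * n by ring,
    zpow_add₀ (gJ_ne_zero α hz), zpow_mul, zpow_natCast, mul_pow]
  ring

open PowerSeries (rescale exp) in
theorem psActG_apply (l : ℤ) (Φ : ℂ → PowerSeries ℂ) (α : GL2P) (z : ℂ) :
    psActG l Φ α z = PowerSeries.C (detpow α l * gJ α z ^ (-l)) *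
      (rescale (-gK α z) (exp ℂ) * rescale ((gdet α : ℂ) * gJ α z ^ (-2 : ℤ)) (Φ (gact α z))) := by
  rw [psActG, mul_assoc]
  congr 2
  ext n
  simp [div_eq_mul_inv]

theorem PiDM_psActG {δ : ℕ} {Φ : ℂ → PowerSeries ℂ} (hΦ : ∀ w, PowerSeries.X ^ δ ∣ Φ w)
    (l : ℤ) (m : ℕ) (α : GL2P) {z : ℂ} (hz : z ∈ UHP) :
    PiDM δ m (psActG l Φ α) z = polyActG (l + 2 * (m : ℤ) + 2 * (δ : ℤ)) (PiDM δ m Φ) α z := by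
  set u := (gdet α : ℂ) * gJ α z ^ (-2 : ℤ)
  have hu : u ≠ 0 := mul_ne_zero (by exact_mod_cast (gdet_pos α).ne')
    (zpow_ne_zero _ (gJ_ne_zero α hz))
  have hu_inv : (gdet α : ℂ)⁻¹ * gJ α z ^ 2 = u⁻¹ := by
    rw [mul_inv, zpow_neg, inv_inv, zpow_ofNat]
  have hweight : l + 2 * (m : ℤ) + 2 * (δ : ℤ) = l + 2 * ((m + δ : ℕ) : ℤ) := by push_cast; ring
  have hdvd : PowerSeries.X ^ δ ∣ psActG l Φ α z := by
    rw [psActG_apply]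
    exact dvd_mul_of_dvd_right (dvd_mul_of_dvd_right (PowerSeries.X_pow_dvd_rescale (hΦ _) u) _) _
  rw [PiDM_apply_eq_coeffMulExp m hdvd, psActG_apply, coeffMulExp_C_mul,
    coeffMulExp_rescale_exp_mul, coeffMulExp_rescale _ hu,
    ← PiDM_apply_eq_coeffMulExp m (hΦ _), polyActG, hweight,
    detpow_mul_gJ_zpow_add_two_mul α hz, hu_inv, mul_comp, C_comp, comp_assoc, mul_comp, C_comp,
    X_comp, sub_eq_add_neg, ← C_neg]
  simp only [C_mul]
  ring

theorem PiDM_sum {ι : Type*} (s : Finset ι) (Ψ : ι → ℂ → PowerSeries ℂ) (δ m : ℕ) (z : ℂ) :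
    PiDM δ m (fun w => ∑ i ∈ s, Ψ i w) z = ∑ i ∈ s, PiDM δ m (Ψ i) z := by
  unfold PiDM
  rw [Finset.sum_comm]
  refine Finset.sum_congr rfl fun r _ => ?_
  rw [map_sum, Finset.sum_div, map_sum, Finset.sum_mul]

theorem stmt11_general (Γ : Subgroup SL2R) (l : ℤ) (m δ : ℕ)
    (Φ : ℂ → PowerSeries ℂ) (hΦ : InFXd δ Φ) :
    (∀ α : GL2P, ∀ z ∈ UHP,
      PiDM δ m (psActG l Φ α) z =
        polyActG (l + 2 * (m : ℤ) + 2 * (δ : ℤ)) (PiDM δ m Φ) α z) ∧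
    (∀ (α : GL2P) (s : ℕ) (A : Fin s → GL2P),
      (∀ i, ∃ γ₁ ∈ Γ, ∃ γ₂ ∈ Γ, A i = (γ₁ : GL2P) * α * (γ₂ : GL2P)) →
      (∀ γ₁ ∈ Γ, ∀ γ₂ ∈ Γ,
        ∃ i, ∃ γ ∈ Γ, (γ₁ : GL2P) * α * (γ₂ : GL2P) = (γ : GL2P) * A i) →
      (∀ i j : Fin s, (∃ γ ∈ Γ, A i = (γ : GL2P) * A j) → i = j) →
      ∀ z ∈ UHP,
        PiDM δ m (fun w => ∑ i, psActG l Φ (A i) w) z =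
          ∑ i, polyActG (l + 2 * (m : ℤ) + 2 * (δ : ℤ)) (PiDM δ m Φ) (A i) z) := by
  have hdvd : ∀ w, PowerSeries.X ^ δ ∣ Φ w := fun w => PowerSeries.X_pow_dvd_iff.2 (hΦ.1 w)
  refine ⟨fun α z hz => PiDM_psActG hdvd l m α hz, fun α s A _ _ _ z hz => ?_⟩
  rw [PiDM_sum]
  exact Finset.sum_congr rfl fun i _ => PiDM_psActG hdvd l m (A i) hz

theorem stmt11 (Γ : Subgroup SL2R) (hΓ : DiscreteTopology Γ) (l : ℤ) (m δ : ℕ)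
    (Φ : ℂ → PowerSeries ℂ) (hΦ : InFXd δ Φ) :
    (∀ α : GL2P, ∀ z ∈ UHP,
      PiDM δ m (psActG l Φ α) z =
        polyActG (l + 2 * (m : ℤ) + 2 * (δ : ℤ)) (PiDM δ m Φ) α z) ∧
    (∀ (α : GL2P) (s : ℕ) (A : Fin s → GL2P),
      (∀ i, ∃ γ₁ ∈ Γ, ∃ γ₂ ∈ Γ, A i = (γ₁ : GL2P) * α * (γ₂ : GL2P)) →
      (∀ γ₁ ∈ Γ, ∀ γ₂ ∈ Γ,
        ∃ i, ∃ γ ∈ Γ, (γ₁ : GL2P) * α * (γ₂ : GL2P) = (γ : GL2P) * A i) →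
      (∀ i j : Fin s, (∃ γ ∈ Γ, A i = (γ : GL2P) * A j) → i = j) →
      ∀ z ∈ UHP,
        PiDM δ m (fun w => ∑ i, psActG l Φ (A i) w) z =
          ∑ i, polyActG (l + 2 * (m : ℤ) + 2 * (δ : ℤ)) (PiDM δ m Φ) (A i) z) :=
  stmt11_general Γ l m δ Φ hΦ
end
end
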